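/- Every element of the group H can be written uniquely as a product φ(g)·n with g ∈ H₃(ℝ) and n in the subgroup {[[1,0,0,0],[0,1,0,t],[0,0,1,0],[0,0,0,1]] : t ∈ ℝ}. -/
import Mathlib

def Hmat (A B C D : ℝ) : Matrix (Fin 4) (Fin 4) ℝ :=
  !![1, A, B, D; 0, 1, A, C; 0, 0, 1, A; 0, 0, 0, 1]

noncomputable def phiMat (a b c : ℝ) : Matrix (Fin 4) (Fin 4) ℝ :=
  !![1, a, a ^ 2 / 2 + b, a ^ 3 / 6 + a * b - c;
     0, 1, a, a ^ 2 / 2;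
     0, 0, 1, a;
     0, 0, 0, 1]

/-- The one-parameter subgroup of matrices `[[1,0,0,0],[0,1,0,t],[0,0,1,0],[0,0,0,1]]`. -/
def Nmat (t : ℝ) : Matrix (Fin 4) (Fin 4) ℝ :=
  !![1, 0, 0, 0; 0, 1, 0, t; 0, 0, 1, 0; 0, 0, 0, 1]

lemma prod_eq (a b c t : ℝ) :
    phiMat a b c * Nmat t =
    !![1, a, a ^ 2 / 2 + b, a ^ 3 / 6 + a * b - c + a * t;
       0, 1, a, a ^ 2 / 2 + t;
       0, 0, 1, a;
       0, 0, 0, 1] := by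
  ext i j
  fin_cases i <;> fin_cases j <;>
    · simp [phiMat, Nmat, Matrix.mul_apply, Fin.sum_univ_four, Matrix.vecHead, Matrix.vecTail]
      try ring

/-- Every element of `H` factors uniquely as `φ(g) · n` with `g ∈ H₃(ℝ)` and `n ∈ N`. -/
theorem H_unique_factorization (A B C D : ℝ) :
    ∃! p : ℝ × ℝ × ℝ × ℝ,
      Hmat A B C D = phiMat p.1 p.2.1 p.2.2.1 * Nmat p.2.2.2 := by
  refine ⟨(A, B - A ^ 2 / 2, A ^ 3 / 6 + A * (B - A ^ 2 / 2) + A * (C - A ^ 2 / 2) - D,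
    C - A ^ 2 / 2), ?_, ?_⟩
  · show Hmat A B C D = _
    rw [prod_eq]
    ext i j
    fin_cases i <;> fin_cases j <;> · simp [Hmat]; try ring
  · rintro ⟨a, b, c, t⟩ h
    rw [prod_eq] at h
    have h01 := congrFun (congrFun h 0) 1
    have h02 := congrFun (congrFun h 0) 2
    have h03 := congrFun (congrFun h 0) 3
    have h13 := congrFun (congrFun h 1) 3
    simp [Hmat] at h01 h02 h03 h13
    subst h01 h02 h13 h03
    refine Prod.ext rfl (Prod.ext ?_ (Prod.ext ?_ ?_)) <;> simp
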